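/- arXiv:1506.06087 — 7 statements merged into one kernel-verified Lean document; each statement's English description precedes it below -/
import Mathlib

section
/- A graph G with v vertices and e edges is super edge-magic if and only if there exists a bijection λ from V(G) to {1,2,...,v} such that the set S = {λ(x)+λ(y) : xy ∈ E(G)} consists of e consecutive integers; in that case λ extends to a super edge-magic labeling with magic constant c = v + e + s, where s = min(S). -/
/-!
The vertex labels of a super edge-magic labeling are `1, …, v`, so its edge labels are
`v + 1, …, v + e`; on every edge the vertex sum is `c` minus the edge label, so the vertex sums
are `e` consecutive integers. Conversely, if the vertex sums are `s, …, s + e - 1`, giving each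
edge the label `v + e + s` minus its vertex sum uses exactly the labels `v + 1, …, v + e` and
makes every edge total `v + e + s`.
-/

open Function Set

namespace Set

theorem range_eq_Ico_of_injective {α : Type*} [Finite α] {f : α → ℕ} {a b : ℕ}
    (hf : Injective f) (hmaps : ∀ x, f x ∈ Ico a b) (hcard : Nat.card α = b - a) :
    range f = Ico a b :=
  eq_of_subset_of_ncard_le (range_subset_iff.2 hmaps)
    (by rw [ncard_Ico_nat, ncard_range_of_injective hf, hcard])

theorem injective_of_range_eq_Icc {α : Type*} [Finite α] {f : α → ℕ} {s : ℕ}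
    (hf : range f = Icc s (s + Nat.card α - 1)) : Injective f := by
  cases isEmpty_or_nonempty α
  · exact injective_of_subsingleton f
  · have hcard : (f '' univ).ncard = (univ : Set α).ncard := by
      rw [image_univ, hf, ncard_Icc_nat, ncard_univ]
      have := Nat.card_pos (α := α)
      omega
    exact injOn_univ.1 (injOn_of_ncard_image_eq hcard)

theorem range_comp_inr_eq_sdiff {α β γ : Type*} {f : α ⊕ β → γ} (hf : Injective f) :
    range (f ∘ Sum.inr) = range f \ range (f ∘ Sum.inl) := by
  rw [range_comp, range_comp, ← compl_range_inl, image_compl_eq_range_sdiff_image hf]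

-- `Icc s₀ (s₀ - 1)` is empty only for `s₀ ≠ 0`, because of truncated subtraction
theorem exists_Icc_eq_Ico (s n : ℕ) : ∃ s₀, Icc s₀ (s₀ + n - 1) = Ico s (s + n) := by
  rcases n.eq_zero_or_pos with rfl | hn
  · exact ⟨1, by simp⟩
  · exact ⟨s, by rw [← Ico_add_one_right_eq_Icc, Nat.sub_add_cancel (by omega)]⟩

end Set

namespace SimpleGraph

variable {V : Type*} (G : SimpleGraph V)

def edgeSum (g : V → ℕ) (E : G.edgeSet) : ℕ :=
  Sym2.lift ⟨fun x y => g x + g y, fun x y => add_comm (g x) (g y)⟩ E.1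

@[simp]
theorem edgeSum_mk (g : V → ℕ) {x y : V} (h : s(x, y) ∈ G.edgeSet) :
    G.edgeSum g ⟨s(x, y), h⟩ = g x + g y :=
  rfl

variable {G}

theorem forall_edgeSet {P : G.edgeSet → Prop} :
    (∀ E, P E) ↔ ∀ x y (h : G.Adj x y), P ⟨s(x, y), G.mem_edgeSet.mpr h⟩ := by
  refine ⟨fun hP x y h => hP _, fun hP => ?_⟩
  rintro ⟨E, hE⟩
  induction E using Sym2.ind with
  | _ x y => exact hP x y hE

theorem setOf_adj_add_eq_range_edgeSum (g : V → ℕ) :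
    {z | ∃ x y, G.Adj x y ∧ z = g x + g y} = range (G.edgeSum g) := by
  ext z
  constructor
  · rintro ⟨x, y, hxy, rfl⟩
    exact ⟨⟨s(x, y), G.mem_edgeSet.mpr hxy⟩, rfl⟩
  · rintro ⟨E, rfl⟩
    revert E
    exact forall_edgeSet.2 fun x y hxy => ⟨x, y, hxy, rfl⟩

end SimpleGraph

namespace SimpleGraph

variable {V : Type*} [Fintype V] {G : SimpleGraph V} [Fintype G.edgeSet] {v e : ℕ}

theorem range_comp_inl_eq_Icc_and_exists_range_edgeSum_eq_Icc (hv : v = Fintype.card V)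
    (he : e = Fintype.card G.edgeSet) {f : V ⊕ G.edgeSet → ℕ} {c : ℕ} (hf : Injective f)
    (hrange : range f = Icc 1 (v + e)) (hle : ∀ x : V, f (Sum.inl x) ≤ v)
    (hc : ∀ (x y : V) (h : G.Adj x y),
      f (Sum.inl x) + f (Sum.inl y) + f (Sum.inr ⟨s(x, y), G.mem_edgeSet.mpr h⟩) = c) :
    range (f ∘ Sum.inl) = Icc 1 v ∧
      ∃ s₀, range (G.edgeSum (f ∘ Sum.inl)) = Icc s₀ (s₀ + e - 1) := by
  have hmem : ∀ a, f a ∈ Icc 1 (v + e) := fun a => hrange ▸ mem_range_self a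
  have hvertex : range (f ∘ Sum.inl) = Icc 1 v := by
    rw [← Ico_add_one_right_eq_Icc]
    refine range_eq_Ico_of_injective (hf.comp Sum.inl_injective)
      (fun x => ⟨(hmem (Sum.inl x)).1, Nat.lt_succ_of_le (hle x)⟩) ?_
    rw [Nat.card_eq_fintype_card, hv, Nat.add_sub_cancel]
  have hedge : ∀ E, f (Sum.inr E) ∈ Icc (v + 1) (v + e) := by
    have : range (f ∘ Sum.inr) = Icc (v + 1) (v + e) := by
      rw [range_comp_inr_eq_sdiff hf, hrange, hvertex]
      ext z
      simp only [mem_sdiff, mem_Icc]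
      omega
    exact fun E => this ▸ mem_range_self E
  have hsum : ∀ E, G.edgeSum (f ∘ Sum.inl) E + f (Sum.inr E) = c := forall_edgeSet.2 hc
  -- the edge sums are `c` minus the edge labels `v + 1, …, v + e`
  have hsums : range (G.edgeSum (f ∘ Sum.inl)) = Ico (c - (v + e)) (c - (v + e) + e) := by
    refine range_eq_Ico_of_injective (fun E F hEF => ?_) (fun E => ?_) ?_
    · have := hsum E
      have := hsum F
      exact Sum.inr_injective (hf (by omega))
    · have := hsum E
      have := hedge E
      simp only [mem_Icc, mem_Ico] at *
      omega
    · rw [Nat.card_eq_fintype_card, ← he, Nat.add_sub_cancel_left]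
  obtain ⟨s₀, hs₀⟩ := exists_Icc_eq_Ico (c - (v + e)) e
  exact ⟨hvertex, s₀, hsums.trans hs₀.symm⟩

theorem exists_superEdgeMagic_extension (hv : v = Fintype.card V)
    (he : e = Fintype.card G.edgeSet) {g : V → ℕ} {s₀ : ℕ} (hg : Injective g)
    (hrange : range g = Icc 1 v) (hsums : range (G.edgeSum g) = Icc s₀ (s₀ + e - 1)) :
    ∃ f : V ⊕ G.edgeSet → ℕ, (∀ x : V, f (Sum.inl x) = g x) ∧
      Injective f ∧ range f = Icc 1 (v + e) ∧ (∀ x : V, f (Sum.inl x) ≤ v) ∧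
      ∀ (x y : V) (h : G.Adj x y),
        f (Sum.inl x) + f (Sum.inl y)
          + f (Sum.inr ⟨s(x, y), G.mem_edgeSet.mpr h⟩) = v + e + s₀ := by
  have hgmem : ∀ x, g x ∈ Icc 1 v := fun x => hrange ▸ mem_range_self x
  have hsum_mem : ∀ E, G.edgeSum g E ∈ Icc s₀ (s₀ + e - 1) := fun E => hsums ▸ mem_range_self E
  have he_pos : ∀ _ : G.edgeSet, 0 < e := fun E => he ▸ Fintype.card_pos_iff.2 ⟨E⟩
  have hsum_inj : Injective (G.edgeSum g) :=
    injective_of_range_eq_Icc (by rwa [Nat.card_eq_fintype_card, ← he])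
  set label : G.edgeSet → ℕ := fun E => v + e + s₀ - G.edgeSum g E with hlabel
  have hlabel_inj : Injective label := fun E F hEF => by
    have := hsum_mem E
    have := hsum_mem F
    have := he_pos E
    exact hsum_inj (by simp only [hlabel, mem_Icc] at *; omega)
  have hlabel_range : range label = Icc (v + 1) (v + e) := by
    rw [← Ico_add_one_right_eq_Icc]
    refine range_eq_Ico_of_injective hlabel_inj (fun E => ?_) ?_
    · have := hsum_mem E
      have := he_pos E
      simp only [hlabel, mem_Icc, mem_Ico] at *
      omega
    · rw [Nat.card_eq_fintype_card, ← he]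
      omega
  refine ⟨Sum.elim g label, fun _ => rfl, hg.sumElim hlabel_inj fun x E => ?_, ?_,
    fun x => (hgmem x).2, fun x y h => ?_⟩
  · have := (hgmem x).2
    have := hlabel_range ▸ mem_range_self E
    simp only [mem_Icc] at *
    omega
  · rw [Sum.elim_range, hrange, hlabel_range]
    ext z
    simp only [mem_union, mem_Icc]
    omega
  · have := hsum_mem ⟨s(x, y), G.mem_edgeSet.mpr h⟩
    have := he_pos ⟨s(x, y), G.mem_edgeSet.mpr h⟩
    simp only [Sum.elim_inl, Sum.elim_inr, hlabel, edgeSum_mk, mem_Icc] at *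
    omega

end SimpleGraph

open SimpleGraph

/-- A graph `G` with `v` vertices and `e` edges is super edge-magic iff there is a
bijection `g : V → {1,…,v}` whose edge sums form `e` consecutive integers; in that
case `g` extends to a super edge-magic labeling with magic constant `v + e + s`,
where `s` is the minimum edge sum. -/
theorem super_edge_magic_iff {V : Type} [Fintype V] (G : SimpleGraph V)
    [Fintype G.edgeSet] (v e : ℕ) (hv : v = Fintype.card V)
    (he : e = Fintype.card G.edgeSet) :
    ((∃ f : V ⊕ G.edgeSet → ℕ, Function.Injective f ∧
        Set.range f = Set.Icc 1 (v + e) ∧ (∀ x : V, f (Sum.inl x) ≤ v) ∧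
        ∃ c, ∀ (x y : V) (h : G.Adj x y),
          f (Sum.inl x) + f (Sum.inl y)
            + f (Sum.inr ⟨s(x, y), G.mem_edgeSet.mpr h⟩) = c)
      ↔ (∃ g : V → ℕ, Function.Injective g ∧ Set.range g = Set.Icc 1 v ∧
          ∃ s₀, {z | ∃ x y, G.Adj x y ∧ z = g x + g y} = Set.Icc s₀ (s₀ + e - 1)))
    ∧ (∀ (g : V → ℕ) (s₀ : ℕ), Function.Injective g → Set.range g = Set.Icc 1 v →
        {z | ∃ x y, G.Adj x y ∧ z = g x + g y} = Set.Icc s₀ (s₀ + e - 1) →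
        ∃ f : V ⊕ G.edgeSet → ℕ, (∀ x : V, f (Sum.inl x) = g x) ∧
          Function.Injective f ∧ Set.range f = Set.Icc 1 (v + e) ∧
          (∀ x : V, f (Sum.inl x) ≤ v) ∧
          ∀ (x y : V) (h : G.Adj x y),
            f (Sum.inl x) + f (Sum.inl y)
              + f (Sum.inr ⟨s(x, y), G.mem_edgeSet.mpr h⟩) = v + e + s₀) := by
  have extension : ∀ (g : V → ℕ) (s₀ : ℕ), Injective g → range g = Icc 1 v →
      {z | ∃ x y, G.Adj x y ∧ z = g x + g y} = Icc s₀ (s₀ + e - 1) → _ :=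
    fun g s₀ hg hrange hS => exists_superEdgeMagic_extension hv he hg hrange
      ((setOf_adj_add_eq_range_edgeSum g).symm.trans hS)
  refine ⟨⟨fun ⟨f, hf, hrange, hle, c, hc⟩ => ?_, fun ⟨g, hg, hrange, s₀, hS⟩ => ?_⟩, extension⟩
  · obtain ⟨hvertex, s₀, hsums⟩ :=
      range_comp_inl_eq_Icc_and_exists_range_edgeSum_eq_Icc hv he hf hrange hle hc
    exact ⟨f ∘ Sum.inl, hf.comp Sum.inl_injective, hvertex, s₀,
      (setOf_adj_add_eq_range_edgeSum _).trans hsums⟩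
  · obtain ⟨f, -, hf, hrange', hle, hc⟩ := extension g s₀ hg hrange hS
    exact ⟨f, hf, hrange', hle, _, hc⟩
end

section
/- For every m ≥ 2 and n ≥ 3, the disjoint union of m isomorphic copies of the fan F_n admits a C₃-supermagic labeling, and the magic constant equals (m/4)(34n+5+(-1)^{n+1}) + 3. -/
/-! Label a single fan `Fₙ` by the blocks `0, …, 3n - 1`: the path vertices in the order
`v₀, v₂, v₄, …, v₁, v₃, …` (so that consecutive ones have block sum `⌈n/2⌉ + i`), the hub `n`,
the path edge `vᵢvᵢ₊₁` the block `n + 1 + i` and the spoke `cvᵢ` the block `3n - 1 - i`.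
Then every triangle of `Fₙ` has the same block sum `W`. Blow each block `b` up into the `m`
labels `mb + 1, …, mb + m`: in copy `j` a vertex of block `b` gets `mb + j + 1` and an edge
gets `mb + m - j`. A triangle has three vertices and three edges, so `j` cancels and every
triangle of `mFₙ` has weight `m (W + 3) + 3`. -/

open Function

lemma range_val_add_one {α : Type*} {N : ℕ} (e : α ≃ Fin N) :
    Set.range (fun x => (e x : ℕ) + 1) = Set.Icc 1 N := by
  ext l
  simp only [Set.mem_range, Set.mem_Icc]
  constructor
  · rintro ⟨x, rfl⟩
    exact ⟨by omega, (e x).isLt⟩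
  · rintro ⟨h1, h2⟩
    exact ⟨e.symm ⟨l - 1, by omega⟩, by simp only [Equiv.apply_symm_apply]; omega⟩

-- hub, path vertices `vᵢ`, spokes `cvᵢ`, path edges `vᵢvᵢ₊₁`
abbrev FanElem (n : ℕ) : Type := (Unit ⊕ Fin n) ⊕ (Fin n ⊕ Fin (n - 1))

abbrev MFanElem (m n : ℕ) : Type :=
  (Fin m ⊕ Fin m × Fin n) ⊕ ((Fin m × Fin n) ⊕ (Fin m × Fin (n - 1)))

def pathVertexBlock (n i : ℕ) : ℕ := if i % 2 = 0 then i / 2 else (n + 1) / 2 + i / 2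

lemma pathVertexBlock_lt {n i : ℕ} (hi : i < n) : pathVertexBlock n i < n := by
  unfold pathVertexBlock; split_ifs <;> omega

lemma exists_pathVertexBlock_eq {n b : ℕ} (hb : b < n) : ∃ i < n, pathVertexBlock n i = b := by
  by_cases h : b < (n + 1) / 2
  · exact ⟨2 * b, by omega, by simp [pathVertexBlock]⟩
  · exact ⟨2 * (b - (n + 1) / 2) + 1, by omega, by simp [pathVertexBlock]; omega⟩

lemma pathVertexBlock_add_succ (n i : ℕ) :
    pathVertexBlock n i + pathVertexBlock n (i + 1) = (n + 1) / 2 + i := by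
  unfold pathVertexBlock; split_ifs <;> omega

def fanBlock (n : ℕ) : FanElem n → ℕ
  | .inl (.inl ()) => n
  | .inl (.inr i) => pathVertexBlock n i
  | .inr (.inl i) => 3 * n - 1 - i
  | .inr (.inr i) => n + 1 + i

lemma fanBlock_lt {n : ℕ} (hn : 0 < n) (s : FanElem n) : fanBlock n s < 3 * n := by
  rcases s with (⟨⟩ | i) | (i | i)
  · simp only [fanBlock]; omega
  · have := pathVertexBlock_lt i.isLt; simp only [fanBlock]; omega
  · simp only [fanBlock]; omega
  · have := i.isLt; simp only [fanBlock]; omega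

lemma exists_fanBlock_eq {n b : ℕ} (hb : b < 3 * n) : ∃ s, fanBlock n s = b := by
  rcases lt_trichotomy b n with h | rfl | h
  · obtain ⟨i, hi, rfl⟩ := exists_pathVertexBlock_eq h
    exact ⟨.inl (.inr ⟨i, hi⟩), rfl⟩
  · exact ⟨.inl (.inl ()), rfl⟩
  by_cases h' : b < 2 * n
  · exact ⟨.inr (.inr ⟨b - n - 1, by omega⟩), by simp only [fanBlock]; omega⟩
  · exact ⟨.inr (.inl ⟨3 * n - 1 - b, by omega⟩), by simp only [fanBlock]; omega⟩

lemma card_fanElem {n : ℕ} (hn : 0 < n) : Fintype.card (FanElem n) = 3 * n := by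
  simp only [Fintype.card_sum, Fintype.card_unit, Fintype.card_fin]; omega

noncomputable def fanBlockEquiv {n : ℕ} (hn : 0 < n) : FanElem n ≃ Fin (3 * n) :=
  Equiv.ofBijective (fun s => ⟨fanBlock n s, fanBlock_lt hn s⟩) <|
    (Fintype.bijective_iff_surjective_and_card _).2
      ⟨fun b => (exists_fanBlock_eq b.isLt).imp fun _ h => Fin.ext h, by simp [card_fanElem hn]⟩

def mFanSplit (m n : ℕ) : MFanElem m n ≃ FanElem n × Fin m where
  toFun
    | .inl (.inl j) => (.inl (.inl ()), j)
    | .inl (.inr (j, i)) => (.inl (.inr i), j)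
    | .inr (.inl (j, i)) => (.inr (.inl i), j.rev)
    | .inr (.inr (j, i)) => (.inr (.inr i), j.rev)
  invFun
    | (.inl (.inl ()), j) => .inl (.inl j)
    | (.inl (.inr i), j) => .inl (.inr (j, i))
    | (.inr (.inl i), j) => .inr (.inl (j.rev, i))
    | (.inr (.inr i), j) => .inr (.inr (j.rev, i))
  left_inv := by rintro ((j | ⟨j, i⟩) | (⟨j, i⟩ | ⟨j, i⟩)) <;> simp
  right_inv := by rintro ⟨(⟨⟩ | i) | (i | i), j⟩ <;> simp

noncomputable def mFanLabelEquiv (m : ℕ) {n : ℕ} (hn : 0 < n) : MFanElem m n ≃ Fin (3 * n * m) :=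
  (mFanSplit m n).trans (((fanBlockEquiv hn).prodCongr (Equiv.refl _)).trans finProdFinEquiv)

noncomputable def mFanLabel (m : ℕ) {n : ℕ} (hn : 0 < n) (x : MFanElem m n) : ℕ :=
  mFanLabelEquiv m hn x + 1

lemma mFanLabel_apply (m : ℕ) {n : ℕ} (hn : 0 < n) (x : MFanElem m n) :
    mFanLabel m hn x = m * fanBlock n (mFanSplit m n x).1 + (mFanSplit m n x).2 + 1 := by
  simp only [mFanLabel, mFanLabelEquiv, fanBlockEquiv, Equiv.trans_apply, Equiv.prodCongr_apply,
    Equiv.coe_ofBijective, Equiv.coe_refl, finProdFinEquiv_apply_val, Prod.map_snd, id_eq,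
    Prod.map_fst, Nat.add_right_cancel_iff]
  ring

lemma mFanLabel_injective (m : ℕ) {n : ℕ} (hn : 0 < n) : Injective (mFanLabel m hn) :=
  fun _ _ h => (mFanLabelEquiv m hn).injective (Fin.ext (Nat.succ_injective h))

lemma mFanLabel_hub (m : ℕ) {n : ℕ} (hn : 0 < n) (j : Fin m) :
    mFanLabel m hn (.inl (.inl j)) = m * n + j + 1 :=
  mFanLabel_apply m hn _

lemma mFanLabel_pathVertex (m : ℕ) {n : ℕ} (hn : 0 < n) (j : Fin m) (i : Fin n) :
    mFanLabel m hn (.inl (.inr (j, i))) = m * pathVertexBlock n i + j + 1 :=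
  mFanLabel_apply m hn _

lemma mFanLabel_spoke (m : ℕ) {n : ℕ} (hn : 0 < n) (j : Fin m) (i : Fin n) :
    mFanLabel m hn (.inr (.inl (j, i))) = m * (3 * n - 1 - i) + j.rev + 1 :=
  mFanLabel_apply m hn _

lemma mFanLabel_pathEdge (m : ℕ) {n : ℕ} (hn : 0 < n) (j : Fin m) (i : Fin (n - 1)) :
    mFanLabel m hn (.inr (.inr (j, i))) = m * (n + 1 + i) + j.rev + 1 :=
  mFanLabel_apply m hn _

def fanTriangleWeight (n i : ℕ) : ℕ :=
  n + pathVertexBlock n i + pathVertexBlock n (i + 1) + (3 * n - 1 - i) + (3 * n - 1 - (i + 1))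
    + (n + 1 + i)

lemma cast_mod_two_eq_neg_one_pow (n : ℕ) : ((n % 2 : ℕ) : ℚ) = (1 + (-1) ^ (n + 1)) / 2 := by
  rcases Nat.even_or_odd n with h | h
  · rw [Nat.even_iff.1 h, h.add_one.neg_one_pow]; norm_num
  · rw [Nat.odd_iff.1 h, h.add_one.neg_one_pow]; norm_num

lemma fanTriangleWeight_eq {n i : ℕ} (hi : i + 1 < n) :
    (fanTriangleWeight n i : ℚ) = (34 * n - 7 + (-1) ^ (n + 1)) / 4 := by
  have h : 2 * fanTriangleWeight n i + 4 = 17 * n + n % 2 := by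
    have := pathVertexBlock_add_succ n i
    unfold fanTriangleWeight; omega
  have hq := congrArg (Nat.cast : ℕ → ℚ) h
  push_cast at hq
  linarith [cast_mod_two_eq_neg_one_pow n]

lemma mFanLabel_triangle (m : ℕ) {n : ℕ} (hn : 0 < n) (j : Fin m) (i : ℕ) (hi : i + 1 < n) :
    mFanLabel m hn (.inl (.inl j))
      + mFanLabel m hn (.inl (.inr (j, ⟨i, by omega⟩)))
      + mFanLabel m hn (.inl (.inr (j, ⟨i + 1, hi⟩)))
      + mFanLabel m hn (.inr (.inl (j, ⟨i, by omega⟩)))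
      + mFanLabel m hn (.inr (.inl (j, ⟨i + 1, hi⟩)))
      + mFanLabel m hn (.inr (.inr (j, ⟨i, by omega⟩)))
      = m * (fanTriangleWeight n i + 3) + 3 := by
  have hj : (j : ℕ) + j.rev + 1 = m := by rw [Fin.val_rev]; omega
  simp only [mFanLabel_hub, mFanLabel_pathVertex, mFanLabel_spoke, mFanLabel_pathEdge,
    fanTriangleWeight]
  generalize (j.rev : ℕ) = r at hj ⊢
  generalize (j : ℕ) = k at hj ⊢
  subst hj
  ring

/-- `mFₙ` (m ≥ 2 disjoint copies of the fan `Fₙ = K₁ + Pₙ`, n ≥ 3) is `C₃`-supermagic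
with magic constant `(m/4)(34n + 5 + (-1)^{n+1}) + 3`.
Vertices: hubs `Fin m` and path vertices `Fin m × Fin n`.
Edges: spokes `Fin m × Fin n` and path edges `Fin m × Fin (n-1)`. -/
theorem mFan_C3_supermagic (m n : ℕ) (hn : 3 ≤ n) :
    ∃ f : (Fin m ⊕ Fin m × Fin n) ⊕ ((Fin m × Fin n) ⊕ (Fin m × Fin (n - 1))) → ℕ,
      Function.Injective f ∧
      Set.range f = Set.Icc 1 (m * (n + 1) + m * (2 * n - 1)) ∧
      (∀ x : Fin m ⊕ Fin m × Fin n, f (Sum.inl x) ≤ m * (n + 1)) ∧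
      ∀ (j : Fin m) (i : Fin (n - 1)),
        ((f (Sum.inl (Sum.inl j))
          + f (Sum.inl (Sum.inr (j, ⟨i.val, by have := i.isLt; omega⟩)))
          + f (Sum.inl (Sum.inr (j, ⟨i.val + 1, by have := i.isLt; omega⟩)))
          + f (Sum.inr (Sum.inl (j, ⟨i.val, by have := i.isLt; omega⟩)))
          + f (Sum.inr (Sum.inl (j, ⟨i.val + 1, by have := i.isLt; omega⟩)))
          + f (Sum.inr (Sum.inr (j, i))) : ℕ) : ℚ)
        = (m : ℚ) / 4 * (34 * n + 5 + (-1) ^ (n + 1)) + 3 := by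
  have hn0 : 0 < n := by omega
  refine ⟨mFanLabel m hn0, mFanLabel_injective m hn0, ?_, ?_, ?_⟩
  · rw [show m * (n + 1) + m * (2 * n - 1) = 3 * n * m by
      rw [← Nat.mul_add, Nat.mul_comm]; congr 1; omega]
    exact range_val_add_one (mFanLabelEquiv m hn0)
  · rintro (j | ⟨j, i⟩)
    · rw [mFanLabel_hub]; nlinarith [j.isLt]
    · rw [mFanLabel_pathVertex]; nlinarith [j.isLt, pathVertexBlock_lt i.isLt]
  · intro j i
    rw [mFanLabel_triangle m hn0 j i (by omega)]
    push_cast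
    rw [fanTriangleWeight_eq (by omega)]
    ring
end

section
/- For every m ≥ 2 and n ≥ 3, the disjoint union of m copies of the triangular ladder TL_n admits a C₃-supermagic labeling with magic constant 14mn − 3m + 3. -/
/-!
Label each of the six classes of elements (`u`-vertices, `v`-vertices, rungs, `u`-path edges,
`v`-path edges, diagonals) by a block of consecutive integers, listed by position along the
ladder with the `m` copies interleaved: `a + m * i + j`, with `i` and/or `j` reversed in some
blocks. The vertex blocks come first. The reversals are chosen so that in either kind of
triangle the terms `± m * i` and `± j` cancel, and every triangle has weight `14mn - 3m + 3`.
-/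

open Function Set Equiv

section Labeling

variable {α β γ : Type*}

theorem injective_and_range_add_finEquiv {N : ℕ} (a : ℕ) (e : α ≃ Fin N) :
    Injective (fun x => a + (e x : ℕ)) ∧ range (fun x => a + (e x : ℕ)) = Ico a (a + N) := by
  refine ⟨fun x y h => e.injective (Fin.ext (Nat.add_left_cancel h)), ?_⟩
  ext y
  constructor
  · rintro ⟨x, rfl⟩
    simp
  · rintro ⟨hay, hyN⟩
    exact ⟨e.symm ⟨y - a, by omega⟩, by simp only [apply_symm_apply]; omega⟩

theorem injective_and_range_sumElim {f : α → γ} {g : β → γ} {s t : Set γ}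
    (hf : Injective f ∧ range f = s) (hg : Injective g ∧ range g = t) (hst : Disjoint s t) :
    Injective (Sum.elim f g) ∧ range (Sum.elim f g) = s ∪ t := by
  obtain ⟨hf, rfl⟩ := hf
  obtain ⟨hg, rfl⟩ := hg
  exact ⟨hf.sumElim hg fun x y => hst.ne_of_mem (mem_range_self x) (mem_range_self y),
    Sum.elim_range f g⟩

end Labeling

section LadderBlock

variable {m k : ℕ}

def ladderBlockEquiv (σ : Perm (Fin k)) (τ : Perm (Fin m)) : Fin m × Fin k ≃ Fin (k * m) :=
  (prodComm _ _).trans ((prodCongr σ τ).trans finProdFinEquiv)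

def ladderBlock (a : ℕ) (σ : Perm (Fin k)) (τ : Perm (Fin m)) (p : Fin m × Fin k) : ℕ :=
  a + (ladderBlockEquiv σ τ p : ℕ)

theorem ladderBlock_apply (a : ℕ) (σ : Perm (Fin k)) (τ : Perm (Fin m)) (j : Fin m)
    (i : Fin k) : ladderBlock a σ τ (j, i) = a + ((τ j : ℕ) + m * σ i) :=
  rfl

theorem ladderBlock_lt (a : ℕ) (σ : Perm (Fin k)) (τ : Perm (Fin m)) (p : Fin m × Fin k) :
    ladderBlock a σ τ p < a + k * m :=
  Nat.add_lt_add_left (ladderBlockEquiv σ τ p).isLt a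

theorem injective_and_range_ladderBlock (a : ℕ) (σ : Perm (Fin k)) (τ : Perm (Fin m)) :
    Injective (ladderBlock a σ τ) ∧ range (ladderBlock a σ τ) = Ico a (a + k * m) :=
  injective_and_range_add_finEquiv a (ladderBlockEquiv σ τ)

end LadderBlock

-- In increasing order of labels: `u`, `v`, diagonals, rungs, `v`-path, `u`-path.
def ladderLabel (m n : ℕ) :
    ((Fin m × Fin n) ⊕ (Fin m × Fin n)) ⊕
      ((Fin m × Fin n) ⊕ ((Fin m × Fin (n - 1)) ⊕
        ((Fin m × Fin (n - 1)) ⊕ (Fin m × Fin (n - 1))))) → ℕ :=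
  Sum.elim
    (Sum.elim (ladderBlock 1 1 1) (ladderBlock (1 + n * m) Fin.revPerm 1))
    (Sum.elim (ladderBlock (1 + 2 * (n * m) + (n - 1) * m) Fin.revPerm Fin.revPerm)
      (Sum.elim (ladderBlock (1 + 3 * (n * m) + 2 * ((n - 1) * m)) Fin.revPerm Fin.revPerm)
        (Sum.elim (ladderBlock (1 + 3 * (n * m) + (n - 1) * m) 1 Fin.revPerm)
          (ladderBlock (1 + 2 * (n * m)) 1 Fin.revPerm))))

section LadderLabel

variable {m n : ℕ}

theorem injective_and_range_ladderLabel :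
    Injective (ladderLabel m n) ∧
      range (ladderLabel m n) = Ico 1 (1 + 3 * (n * m) + 3 * ((n - 1) * m)) := by
  have h : Injective (ladderLabel m n) ∧ range (ladderLabel m n) = _ :=
    injective_and_range_sumElim
      (injective_and_range_sumElim (injective_and_range_ladderBlock _ _ _)
        (injective_and_range_ladderBlock _ _ _) ?_)
      (injective_and_range_sumElim (injective_and_range_ladderBlock _ _ _)
        (injective_and_range_sumElim (injective_and_range_ladderBlock _ _ _)
          (injective_and_range_sumElim (injective_and_range_ladderBlock _ _ _)
            (injective_and_range_ladderBlock _ _ _) ?_) ?_) ?_) ?_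
  · refine ⟨h.1, h.2.trans ?_⟩
    ext x
    simp only [mem_union, mem_Ico]
    omega
  all_goals
    rw [Set.disjoint_left]
    intro x
    simp only [mem_union, mem_Ico]
    omega

theorem ladderLabel_inl_le (x : (Fin m × Fin n) ⊕ (Fin m × Fin n)) :
    ladderLabel m n (.inl x) ≤ 2 * m * n := by
  rw [show 2 * m * n = n * m + n * m by ring]
  rcases x with p | p
  · have := ladderBlock_lt 1 1 1 p
    simp only [ladderLabel, Sum.elim_inl]
    omega
  · have := ladderBlock_lt (1 + n * m) Fin.revPerm 1 p
    simp only [ladderLabel, Sum.elim_inl, Sum.elim_inr]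
    omega

theorem ladderLabel_triangle_left (j : Fin m) (i : ℕ) (hi : i + 1 < n) :
    ladderLabel m n (.inl (.inl (j, ⟨i, by omega⟩)))
      + ladderLabel m n (.inl (.inr (j, ⟨i, by omega⟩)))
      + ladderLabel m n (.inl (.inl (j, ⟨i + 1, hi⟩)))
      + ladderLabel m n (.inr (.inl (j, ⟨i, by omega⟩)))
      + ladderLabel m n (.inr (.inr (.inl (j, ⟨i, by omega⟩))))
      + ladderLabel m n (.inr (.inr (.inr (.inr (j, ⟨i, by omega⟩)))))
      = 14 * m * n - 3 * m + 3 := by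
  simp only [ladderLabel, Sum.elim_inl, Sum.elim_inr, ladderBlock_apply, Fin.revPerm_apply,
    Fin.val_rev, Perm.one_apply]
  have hj := j.isLt
  have h3m : 3 * m ≤ 14 * m * n := by nlinarith
  zify [(by omega : (j : ℕ) + 1 ≤ m), h3m, hi.le, (by omega : 1 ≤ n),
    (by omega : i + 1 ≤ n - 1)]
  ring

theorem ladderLabel_triangle_right (j : Fin m) (i : ℕ) (hi : i + 1 < n) :
    ladderLabel m n (.inl (.inl (j, ⟨i + 1, hi⟩)))
      + ladderLabel m n (.inl (.inr (j, ⟨i, by omega⟩)))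
      + ladderLabel m n (.inl (.inr (j, ⟨i + 1, hi⟩)))
      + ladderLabel m n (.inr (.inr (.inr (.inr (j, ⟨i, by omega⟩)))))
      + ladderLabel m n (.inr (.inr (.inr (.inl (j, ⟨i, by omega⟩)))))
      + ladderLabel m n (.inr (.inl (j, ⟨i + 1, hi⟩)))
      = 14 * m * n - 3 * m + 3 := by
  simp only [ladderLabel, Sum.elim_inl, Sum.elim_inr, ladderBlock_apply, Fin.revPerm_apply,
    Fin.val_rev, Perm.one_apply]
  have hj := j.isLt
  have h3m : 3 * m ≤ 14 * m * n := by nlinarith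
  zify [(by omega : (j : ℕ) + 1 ≤ m), h3m, hi.le, (by omega : i + 1 + 1 ≤ n),
    (by omega : 1 ≤ n)]
  ring

end LadderLabel

/-- `mTLₙ` (m ≥ 2 copies of the triangular ladder `TLₙ`, n ≥ 3) is `C₃`-supermagic
with magic constant `14mn - 3m + 3`.
Vertices: `u`- and `v`-vertices `Fin m × Fin n`.
Edges: rungs `uᵢvᵢ` (`Fin m × Fin n`), `u`-path edges, `v`-path edges and
diagonals `uᵢ₊₁vᵢ` (each `Fin m × Fin (n-1)`).
The triangles are `{uᵢ, vᵢ, uᵢ₊₁}` and `{uᵢ₊₁, vᵢ, vᵢ₊₁}`. -/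
theorem mTriangularLadder_C3_supermagic (m n : ℕ) :
    ∃ f : ((Fin m × Fin n) ⊕ (Fin m × Fin n)) ⊕
          ((Fin m × Fin n) ⊕ ((Fin m × Fin (n - 1)) ⊕
            ((Fin m × Fin (n - 1)) ⊕ (Fin m × Fin (n - 1))))) → ℕ,
      Function.Injective f ∧
      Set.range f = Set.Icc 1 (2 * m * n + m * (4 * n - 3)) ∧
      (∀ x : (Fin m × Fin n) ⊕ (Fin m × Fin n), f (Sum.inl x) ≤ 2 * m * n) ∧
      (∀ (j : Fin m) (i : Fin (n - 1)),
        f (Sum.inl (Sum.inl (j, ⟨i.val, by have := i.isLt; omega⟩)))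
          + f (Sum.inl (Sum.inr (j, ⟨i.val, by have := i.isLt; omega⟩)))
          + f (Sum.inl (Sum.inl (j, ⟨i.val + 1, by have := i.isLt; omega⟩)))
          + f (Sum.inr (Sum.inl (j, ⟨i.val, by have := i.isLt; omega⟩)))
          + f (Sum.inr (Sum.inr (Sum.inl (j, i))))
          + f (Sum.inr (Sum.inr (Sum.inr (Sum.inr (j, i)))))
        = 14 * m * n - 3 * m + 3) ∧
      (∀ (j : Fin m) (i : Fin (n - 1)),
        f (Sum.inl (Sum.inl (j, ⟨i.val + 1, by have := i.isLt; omega⟩)))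
          + f (Sum.inl (Sum.inr (j, ⟨i.val, by have := i.isLt; omega⟩)))
          + f (Sum.inl (Sum.inr (j, ⟨i.val + 1, by have := i.isLt; omega⟩)))
          + f (Sum.inr (Sum.inr (Sum.inr (Sum.inr (j, i)))))
          + f (Sum.inr (Sum.inr (Sum.inr (Sum.inl (j, i)))))
          + f (Sum.inr (Sum.inl (j, ⟨i.val + 1, by have := i.isLt; omega⟩)))
        = 14 * m * n - 3 * m + 3) := by
  obtain ⟨hinj, hrange⟩ := injective_and_range_ladderLabel (m := m) (n := n)
  have hcard : 2 * m * n + m * (4 * n - 3) = 3 * (n * m) + 3 * ((n - 1) * m) := by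
    rcases n with _ | n
    · simp
    · rw [show 4 * (n + 1) - 3 = 4 * n + 1 by omega, Nat.add_sub_cancel]
      ring
  refine ⟨ladderLabel m n, hinj, ?_, ladderLabel_inl_le, fun j i => ?_, fun j i => ?_⟩
  · rw [hrange, hcard]
    ext x
    simp only [mem_Ico, mem_Icc]
    omega
  · exact ladderLabel_triangle_left j i (by omega)
  · exact ladderLabel_triangle_right j i (by omega)
end

section
/- For every m ≥ 2 and even n ≥ 2, the disjoint union of m copies of the book graph B_n = K_{1,n} × K₂ admits a C₄-supermagic labeling with magic constant 15mn + 17m + 4. -/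
/-!
Lay the `(5n + 3)m` labels out column by column in a grid with `m` rows: the element in column
`c` and row `r` gets label `c * m + r + 1`. Every element of the `j`-th book lies in row `j` or in
the mirrored row `m - 1 - j`, four of each on every page, so the rows of a page add up to
`4(m - 1)`. The vertices fill the first `2n + 2` columns. For even `i` the vertex `vᵢ` and the
edge `u₁wᵢ` sit in relative columns `n/2 + i/2` and `i/2`, for odd `i` in `i/2` and
`n/2 + 1 + i/2`, so their sum is `n/2 + i` in both cases; together with the column `2 + n + i`
of `wᵢ` this is balanced by the columns `2 + 4n - i` and `2 + 5n - i` of `u₂vᵢ` and `vᵢwᵢ`,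
and every page has the same column sum. The relative column `n/2`, which the edges `u₁wᵢ` leave
free only because `n` is even, takes the spine edges.
-/

open Function

theorem Nat.mul_add_lt_mul_of_lt {c r K m : ℕ} (hc : c < K) (hr : r < m) : c * m + r < K * m :=
  calc c * m + r < c * m + m := by omega
    _ = (c + 1) * m := (Nat.succ_mul c m).symm
    _ ≤ K * m := Nat.mul_le_mul_right m hc

theorem injective_mul_add_of_injective_prod {α : Type*} {m : ℕ} {c : α → ℕ} {r : α → Fin m}
    (h : Injective fun x => (c x, r x)) : Injective fun x => c x * m + r x := by
  intro x y hxy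
  have : NeZero m := ⟨(r x).pos.ne'⟩
  exact ((Nat.divModEquiv m).symm.injective.comp h) hxy

theorem range_eq_Icc_one_of_injective {α : Type*} [Fintype α] {f : α → ℕ} {N : ℕ}
    (hf : Injective f) (hmaps : ∀ x, f x ∈ Set.Icc 1 N) (hcard : Fintype.card α = N) :
    Set.range f = Set.Icc 1 N :=
  Set.eq_of_subset_of_ncard_le (Set.range_subset_iff.2 hmaps)
    (by simp [Set.ncard_range_of_injective hf, hcard]) (Set.finite_Icc 1 N)

abbrev BookVertex (m n : ℕ) := (Fin m × Fin 2) ⊕ ((Fin m × Fin n) ⊕ (Fin m × Fin n))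

abbrev BookEdge (m n : ℕ) := Fin m ⊕ ((Fin m × Fin n) ⊕ ((Fin m × Fin n) ⊕ (Fin m × Fin n)))

abbrev BookElem (m n : ℕ) := BookVertex m n ⊕ BookEdge m n

variable {m n : ℕ}

def bookCol (n : ℕ) : BookElem m n → ℕ
  | .inl (.inl (_, k)) => k
  | .inl (.inr (.inl (_, i))) => 2 + if i.val % 2 = 0 then n / 2 + i.val / 2 else i.val / 2
  | .inl (.inr (.inr (_, i))) => 2 + n + i.val
  | .inr (.inl _) => 2 + 2 * n + n / 2
  | .inr (.inr (.inl (_, i))) =>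
    2 + 2 * n + if i.val % 2 = 0 then i.val / 2 else n / 2 + 1 + i.val / 2
  | .inr (.inr (.inr (.inl (_, i)))) => 2 + 4 * n - i.val
  | .inr (.inr (.inr (.inr (_, i)))) => 2 + 5 * n - i.val

def bookRow : BookElem m n → Fin m
  | .inl (.inl (j, k)) => if k = 0 then j else j.rev
  | .inl (.inr (.inl (j, _))) => j
  | .inl (.inr (.inr (j, _))) => j
  | .inr (.inl j) => j.rev
  | .inr (.inr (.inl (j, _))) => j
  | .inr (.inr (.inr (.inl (j, _)))) => j.rev
  | .inr (.inr (.inr (.inr (j, _)))) => j.rev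

def bookLabel (m n : ℕ) (x : BookElem m n) : ℕ := bookCol n x * m + bookRow x + 1

def pageWeight (f : BookElem m n → ℕ) (j : Fin m) (i : Fin n) : ℕ :=
  f (.inl (.inl (j, 0))) + f (.inl (.inl (j, 1))) + f (.inl (.inr (.inl (j, i))))
    + f (.inl (.inr (.inr (j, i)))) + f (.inr (.inl j)) + f (.inr (.inr (.inl (j, i))))
    + f (.inr (.inr (.inr (.inl (j, i))))) + f (.inr (.inr (.inr (.inr (j, i)))))

theorem bookCol_lt (x : BookElem m n) : bookCol n x < 5 * n + 3 := by
  rcases x with ((⟨_, k⟩ | ⟨_, i⟩ | ⟨_, i⟩) | (_ | ⟨_, i⟩ | ⟨_, i⟩ | ⟨_, i⟩)) <;>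
    simp only [bookCol] <;> (try split_ifs) <;> omega

theorem bookCol_inl_lt (x : BookVertex m n) :
    bookCol n (.inl x) < 2 * n + 2 := by
  rcases x with (⟨_, k⟩ | ⟨_, i⟩ | ⟨_, i⟩) <;>
    simp only [bookCol] <;> (try split_ifs) <;> omega

theorem injective_bookCol_bookRow (heven : Even n) :
    Injective fun x : BookElem m n => (bookCol n x, bookRow x) := by
  obtain ⟨q, rfl⟩ := heven
  rintro ((⟨j, k⟩ | ⟨j, i⟩ | ⟨j, i⟩) | (j | ⟨j, i⟩ | ⟨j, i⟩ | ⟨j, i⟩))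
    ((⟨j', k'⟩ | ⟨j', i'⟩ | ⟨j', i'⟩) | (j' | ⟨j', i'⟩ | ⟨j', i'⟩ | ⟨j', i'⟩)) h
  all_goals
    simp only [bookCol, bookRow, Prod.mk.injEq, Fin.ext_iff, apply_ite Fin.val, Fin.val_rev,
      reduceCtorEq, Sum.inl.injEq, Sum.inr.injEq] at h ⊢
    (try split_ifs at h) <;> omega

theorem card_bookElem : Fintype.card (BookElem m n) = (5 * n + 3) * m := by
  simp only [Fintype.card_sum, Fintype.card_prod, Fintype.card_fin]
  ring

theorem pageWeight_bookCol (heven : Even n) (j : Fin m) (i : Fin n) :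
    pageWeight (bookCol n) j i = 15 * n + 13 := by
  obtain ⟨q, rfl⟩ := heven
  simp only [pageWeight, bookCol]
  (try split_ifs) <;> omega

theorem pageWeight_bookRow (j : Fin m) (i : Fin n) :
    pageWeight (fun x => (bookRow x : ℕ)) j i + 4 = 4 * m := by
  simp only [pageWeight, bookRow, Fin.isValue, ↓reduceIte, one_ne_zero, Fin.val_rev]
  omega

theorem pageWeight_bookLabel (heven : Even n) (j : Fin m) (i : Fin n) :
    pageWeight (bookLabel m n) j i = 15 * m * n + 17 * m + 4 := by
  have hrow := pageWeight_bookRow j i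
  calc pageWeight (bookLabel m n) j i
      = pageWeight (bookCol n) j i * m + (pageWeight (fun x => (bookRow x : ℕ)) j i + 4) + 4 := by
        simp only [pageWeight, bookLabel]; ring
    _ = 15 * m * n + 17 * m + 4 := by rw [pageWeight_bookCol heven, hrow]; ring

theorem bookLabel_injective (heven : Even n) : Injective (bookLabel m n) :=
  (add_left_injective 1).comp <|
    injective_mul_add_of_injective_prod (injective_bookCol_bookRow heven)

theorem range_bookLabel (heven : Even n) :
    Set.range (bookLabel m n) = Set.Icc 1 ((5 * n + 3) * m) :=
  range_eq_Icc_one_of_injective (bookLabel_injective heven)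
    (fun x => ⟨by simp [bookLabel], Nat.mul_add_lt_mul_of_lt (bookCol_lt x) (bookRow x).isLt⟩)
    card_bookElem

theorem bookLabel_inl_le (x : BookVertex m n) :
    bookLabel m n (.inl x) ≤ 2 * m * (n + 1) := by
  have := Nat.mul_add_lt_mul_of_lt (bookCol_inl_lt x) (bookRow (.inl x)).isLt
  simp only [bookLabel]
  linarith

theorem mBook_even_C4_supermagic_general (m n : ℕ) (heven : Even n) :
    ∃ f : ((Fin m × Fin 2) ⊕ ((Fin m × Fin n) ⊕ (Fin m × Fin n))) ⊕
          (Fin m ⊕ ((Fin m × Fin n) ⊕ ((Fin m × Fin n) ⊕ (Fin m × Fin n)))) → ℕ,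
      Function.Injective f ∧
      Set.range f = Set.Icc 1 (2 * m * (n + 1) + m * (3 * n + 1)) ∧
      (∀ x : (Fin m × Fin 2) ⊕ ((Fin m × Fin n) ⊕ (Fin m × Fin n)),
        f (Sum.inl x) ≤ 2 * m * (n + 1)) ∧
      ∀ (j : Fin m) (i : Fin n),
        f (Sum.inl (Sum.inl (j, 0)))
          + f (Sum.inl (Sum.inl (j, 1)))
          + f (Sum.inl (Sum.inr (Sum.inl (j, i))))
          + f (Sum.inl (Sum.inr (Sum.inr (j, i))))
          + f (Sum.inr (Sum.inl j))
          + f (Sum.inr (Sum.inr (Sum.inl (j, i))))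
          + f (Sum.inr (Sum.inr (Sum.inr (Sum.inl (j, i)))))
          + f (Sum.inr (Sum.inr (Sum.inr (Sum.inr (j, i)))))
        = 15 * m * n + 17 * m + 4 := by
  refine ⟨bookLabel m n, bookLabel_injective heven, ?_, bookLabel_inl_le,
    pageWeight_bookLabel heven⟩
  rw [range_bookLabel heven]
  congr 1
  ring

/-- `mBₙ` (m ≥ 2 copies of the book graph `Bₙ = K_{1,n} × K₂`, even n ≥ 2) is
`C₄`-supermagic with magic constant `15mn + 17m + 4`.
Vertices: spine vertices `u₁, u₂` (`Fin m × Fin 2`), page vertices `vᵢ` and `wᵢ`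
(each `Fin m × Fin n`).  Edges: spine edges `u₁u₂` (`Fin m`), edges `u₁wᵢ`,
`u₂vᵢ` and `vᵢwᵢ` (each `Fin m × Fin n`). The pages are 4-cycles `u₁u₂vᵢwᵢ`. -/
theorem mBook_even_C4_supermagic (m n : ℕ) (hm : 2 ≤ m) (hn : 2 ≤ n) (heven : Even n) :
    ∃ f : ((Fin m × Fin 2) ⊕ ((Fin m × Fin n) ⊕ (Fin m × Fin n))) ⊕
          (Fin m ⊕ ((Fin m × Fin n) ⊕ ((Fin m × Fin n) ⊕ (Fin m × Fin n)))) → ℕ,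
      Function.Injective f ∧
      Set.range f = Set.Icc 1 (2 * m * (n + 1) + m * (3 * n + 1)) ∧
      (∀ x : (Fin m × Fin 2) ⊕ ((Fin m × Fin n) ⊕ (Fin m × Fin n)),
        f (Sum.inl x) ≤ 2 * m * (n + 1)) ∧
      ∀ (j : Fin m) (i : Fin n),
        f (Sum.inl (Sum.inl (j, 0)))
          + f (Sum.inl (Sum.inl (j, 1)))
          + f (Sum.inl (Sum.inr (Sum.inl (j, i))))
          + f (Sum.inl (Sum.inr (Sum.inr (j, i))))
          + f (Sum.inr (Sum.inl j))
          + f (Sum.inr (Sum.inr (Sum.inl (j, i))))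
          + f (Sum.inr (Sum.inr (Sum.inr (Sum.inl (j, i)))))
          + f (Sum.inr (Sum.inr (Sum.inr (Sum.inr (j, i)))))
        = 15 * m * n + 17 * m + 4 :=
  mBook_even_C4_supermagic_general m n heven
end

section
/- For every l ≥ 2 and m, n ≥ 3, the disjoint union of l copies of the generalized antiprism A_m^n admits a C₃-supermagic labeling with magic constant lm(9n−4)+3. -/
/-!
Write each label as `1 + b * lm + c * m + r` with a block `b < 4n - 2`, a copy digit `c < l` and a
residue digit `r < m`. The vertex `v_{i,j}` of copy `k` gets block `n - 1 - j`, copy digit `k` and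
residue `i - j mod m`. The level edge `v_{i,j}v_{i+1,j}`, the path edge `v_{i,j}v_{i,j+1}` and the
diagonal `v_{i,j+1}v_{i+1,j}` get blocks `3n - 2 + j`, `n + j` and `2n - 1 + j`, and the digits
complementary (`c ↦ l - 1 - c`, `r ↦ m - 1 - r`) to those of `v_{i,j}`, `v_{i,j+1}` and
`v_{i+1,j}`.
A vertex and an edge with complementary digits weigh `(b + b' + 1) * lm + 1`, and every triangle
splits into three such pairs, of weights `(4n - 2)lm + 1`, `(2n - 1)lm + 1` and `(3n - 1)lm + 1`.
Inside a block the digits are a shear of the copy and position, so the labelling is a bijection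
onto `[1, (4n - 2)lm]` sending the vertices to `[1, nlm]`.
-/

theorem Fin.val_add_val_rev {N : ℕ} (x : Fin N) : (x : ℕ) + x.rev = N - 1 := by
  rw [Fin.val_rev]
  omega

theorem range_val_add_one_comp_equiv {X : Type*} {N : ℕ} (e : X ≃ Fin N) :
    Set.range (fun x => (e x : ℕ) + 1) = Set.Icc 1 N := by
  ext v
  simp only [Set.mem_range, Set.mem_Icc]
  constructor
  · rintro ⟨x, rfl⟩
    exact ⟨by omega, (e x).isLt⟩
  · rintro ⟨h1, h2⟩
    exact ⟨e.symm ⟨v - 1, by omega⟩, by simp only [Equiv.apply_symm_apply]; omega⟩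

theorem digits_add_complement {l m : ℕ} (b b' : ℕ) (k : Fin l) (x : Fin m) :
    b * (l * m) + k * m + x + 1 + (b' * (l * m) + k.rev * m + x.rev + 1) =
      (b + b' + 1) * (l * m) + 1 := by
  have hk := k.val_add_val_rev
  have hx := x.val_add_val_rev
  have := k.isLt
  have := x.isLt
  zify [show 1 ≤ l by omega, show 1 ≤ m by omega] at hk hx ⊢
  linear_combination (m : ℤ) * hk + hx

namespace GenAntiprism

-- `(copy, position i, row j)`; the summands are vertices, level, path and diagonal edges.
abbrev Elem (l m n : ℕ) : Type :=
  (Fin l × Fin m × Fin n) ⊕ ((Fin l × Fin m × Fin n) ⊕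
    ((Fin l × Fin m × Fin (n - 1)) ⊕ (Fin l × Fin m × Fin (n - 1))))

variable {l m n : ℕ}

def layerCode {N : ℕ} (τ : Equiv.Perm (Fin l)) (σ : Equiv.Perm (Fin N))
    (ρ : Fin N → Equiv.Perm (Fin m)) : Fin l × Fin m × Fin N ≃ Fin (N * (l * m)) :=
  ((Equiv.prodAssoc _ _ _).symm.trans (Equiv.prodComm _ _)).trans
    ((Equiv.prodShear σ fun j => (τ.prodCongr (ρ j)).trans finProdFinEquiv).trans
      finProdFinEquiv)

theorem layerCode_apply_val {N : ℕ} (τ : Equiv.Perm (Fin l)) (σ : Equiv.Perm (Fin N))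
    (ρ : Fin N → Equiv.Perm (Fin m)) (k : Fin l) (i : Fin m) (j : Fin N) :
    (layerCode τ σ ρ (k, i, j) : ℕ) = σ j * (l * m) + τ k * m + ρ j i := by
  simp only [layerCode, Equiv.trans_apply, Equiv.prodAssoc_symm_apply, Equiv.prodComm_apply,
    Prod.swap_prod_mk, Equiv.prodShear_apply, Equiv.prodCongr_apply, Prod.map_apply,
    finProdFinEquiv_apply_val]
  ring

variable [NeZero m]

def residue (j : ℕ) : Equiv.Perm (Fin m) := Equiv.subRight (Fin.ofNat m j)

variable (l m n)

def labelEquiv :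
    Elem l m n ≃ Fin (n * (l * m) + ((n - 1) * (l * m) + (n - 1) * (l * m) + n * (l * m))) :=
  (Equiv.sumCongr (layerCode 1 Fin.revPerm fun j => residue j)
    ((Equiv.sumComm _ _).trans
      ((Equiv.sumCongr
        ((Equiv.sumCongr
          (layerCode Fin.revPerm 1 fun j => (residue (j + 1)).trans Fin.revPerm)
          (layerCode Fin.revPerm 1 fun j =>
            (Equiv.addRight 1).trans ((residue j).trans Fin.revPerm))).trans finSumFinEquiv)
        (layerCode Fin.revPerm 1 fun j => (residue j).trans Fin.revPerm)).trans
        finSumFinEquiv))).trans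
    finSumFinEquiv

def label (x : Elem l m n) : ℕ := labelEquiv l m n x + 1

variable {l m n}

theorem label_injective : Function.Injective (label l m n) :=
  (add_left_injective 1).comp (Fin.val_injective.comp (labelEquiv l m n).injective)

theorem range_label : Set.range (label l m n) = Set.Icc 1 (l * m * n + l * m * (3 * n - 2)) := by
  refine (range_val_add_one_comp_equiv (labelEquiv l m n)).trans ?_
  congr 1
  obtain _ | n := n
  · simp
  · rw [Nat.add_sub_cancel, show 3 * (n + 1) - 2 = 3 * n + 1 by omega]
    ring

theorem label_vertex (k : Fin l) (i : Fin m) (j : Fin n) :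
    label l m n (.inl (k, i, j)) =
      (n - (j + 1)) * (l * m) + k * m + (↑(i - Fin.ofNat m j) : ℕ) + 1 := by
  simp only [label, labelEquiv, residue, Equiv.trans_apply, Equiv.coe_trans, Equiv.sumCongr_apply,
    Sum.map_inl, finSumFinEquiv_apply_left, Fin.val_castAdd, layerCode_apply_val, Fin.revPerm_apply,
    Equiv.Perm.coe_one, id_eq, Equiv.subRight_apply]
  rw [Fin.val_rev]

theorem label_level (k : Fin l) (i : Fin m) (j : Fin n) :
    label l m n (.inr (.inl (k, i, j))) =
      (n + 2 * (n - 1) + j) * (l * m) + Fin.rev k * m + Fin.rev (i - Fin.ofNat m j) + 1 := by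
  simp only [label, labelEquiv, residue, Equiv.trans_apply, Equiv.coe_trans, Function.comp_apply,
    Equiv.sumCongr_apply, Equiv.sumComm_apply, Sum.map_inr, Sum.swap_inl,
    finSumFinEquiv_apply_right, Fin.val_natAdd, layerCode_apply_val, Fin.revPerm_apply,
    Equiv.Perm.coe_one, id_eq, Equiv.subRight_apply]
  ring

theorem label_path (k : Fin l) (i : Fin m) (j : Fin (n - 1)) :
    label l m n (.inr (.inr (.inl (k, i, j)))) =
      (n + j) * (l * m) + Fin.rev k * m + Fin.rev (i - Fin.ofNat m (j + 1)) + 1 := by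
  simp only [label, labelEquiv, residue, Equiv.trans_apply, Equiv.coe_trans, Function.comp_apply,
    Equiv.sumCongr_apply, Equiv.sumComm_apply, Sum.map_inl, Sum.map_inr, Sum.swap_inr,
    finSumFinEquiv_apply_left, finSumFinEquiv_apply_right, Fin.val_castAdd, Fin.val_natAdd,
    layerCode_apply_val, Fin.revPerm_apply, Equiv.Perm.coe_one, id_eq, Equiv.subRight_apply]
  ring

theorem label_diag (k : Fin l) (i : Fin m) (j : Fin (n - 1)) :
    label l m n (.inr (.inr (.inr (k, i, j)))) =
      (n + (n - 1) + j) * (l * m) + Fin.rev k * m + Fin.rev (i + 1 - Fin.ofNat m j) + 1 := by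
  simp only [label, labelEquiv, residue, Equiv.trans_apply, Equiv.coe_trans, Function.comp_apply,
    Equiv.sumCongr_apply, Equiv.sumComm_apply, Sum.map_inl, Sum.map_inr, Sum.swap_inr,
    finSumFinEquiv_apply_left, finSumFinEquiv_apply_right, Fin.val_castAdd, Fin.val_natAdd,
    layerCode_apply_val, Fin.revPerm_apply, Equiv.Perm.coe_one, id_eq, Equiv.subRight_apply,
    Equiv.coe_addRight]
  ring

theorem label_vertex_le (x : Fin l × Fin m × Fin n) : label l m n (.inl x) ≤ l * m * n := by
  simp only [label, labelEquiv, Equiv.trans_apply, Equiv.sumCongr_apply, Sum.map_inl,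
    finSumFinEquiv_apply_left, Fin.val_castAdd]
  exact Nat.succ_le_of_lt ((Fin.isLt _).trans_eq (by ring))

theorem label_vertex_add_label_level (k : Fin l) (i : Fin m) (j : Fin n) :
    label l m n (.inl (k, i, j)) + label l m n (.inr (.inl (k, i, j))) =
      (4 * n - 2) * (l * m) + 1 := by
  rw [label_vertex, label_level, digits_add_complement]
  have := j.isLt
  congr 2
  omega

theorem label_vertex_add_label_path (k : Fin l) (i : Fin m) (j : Fin (n - 1)) :
    label l m n (.inl (k, i, ⟨j + 1, by omega⟩)) + label l m n (.inr (.inr (.inl (k, i, j)))) =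
      (2 * n - 1) * (l * m) + 1 := by
  rw [label_vertex, label_path, digits_add_complement]
  have := j.isLt
  congr 2
  dsimp only
  omega

theorem label_vertex_add_label_diag (k : Fin l) (i : Fin m) (j : Fin (n - 1)) :
    label l m n (.inl (k, i + 1, ⟨j, by omega⟩)) + label l m n (.inr (.inr (.inr (k, i, j)))) =
      (3 * n - 1) * (l * m) + 1 := by
  rw [label_vertex, label_diag, digits_add_complement]
  have := j.isLt
  congr 2
  dsimp only
  omega

theorem triangle_block_sum (l m n : ℕ) :
    (4 * n - 2) * (l * m) + (2 * n - 1) * (l * m) + (3 * n - 1) * (l * m) =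
      l * m * (9 * n - 4) := by
  rw [← add_mul, ← add_mul, mul_comm]
  congr 1
  omega

theorem label_lower_triangle (k : Fin l) (i : Fin m) (j : Fin (n - 1)) :
    label l m n (.inl (k, i, ⟨j, by omega⟩))
      + label l m n (.inl (k, i + 1, ⟨j, by omega⟩))
      + label l m n (.inl (k, i, ⟨j + 1, by omega⟩))
      + label l m n (.inr (.inl (k, i, ⟨j, by omega⟩)))
      + label l m n (.inr (.inr (.inl (k, i, j))))
      + label l m n (.inr (.inr (.inr (k, i, j))))
      = l * m * (9 * n - 4) + 3 := by
  have hlevel := label_vertex_add_label_level k i (⟨j, by omega⟩ : Fin n)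
  have hpath := label_vertex_add_label_path k i j
  have hdiag := label_vertex_add_label_diag k i j
  have hblocks := triangle_block_sum l m n
  omega

theorem label_upper_triangle (k : Fin l) (i : Fin m) (j : Fin (n - 1)) :
    label l m n (.inl (k, i, ⟨j + 1, by omega⟩))
      + label l m n (.inl (k, i + 1, ⟨j + 1, by omega⟩))
      + label l m n (.inl (k, i + 1, ⟨j, by omega⟩))
      + label l m n (.inr (.inl (k, i, ⟨j + 1, by omega⟩)))
      + label l m n (.inr (.inr (.inl (k, i + 1, j))))
      + label l m n (.inr (.inr (.inr (k, i, j))))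
      = l * m * (9 * n - 4) + 3 := by
  have hlevel := label_vertex_add_label_level k i (⟨j + 1, by omega⟩ : Fin n)
  have hpath := label_vertex_add_label_path k (i + 1) j
  have hdiag := label_vertex_add_label_diag k i j
  have hblocks := triangle_block_sum l m n
  omega

end GenAntiprism

/-- The disjoint union of `l ≥ 2` copies of the generalized antiprism `Aₘⁿ`
(`m, n ≥ 3`) is `C₃`-supermagic with magic constant `lm(9n - 4) + 3`.
Vertices `v_{i,j}`: `Fin l × Fin m × Fin n` (first coordinate = copy).
Edges: level (cycle) edges `v_{i,j}v_{i+1,j}` (`Fin l × Fin m × Fin n`),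
path edges `v_{i,j}v_{i,j+1}` and diagonal edges `v_{i,j+1}v_{i+1,j}`
(each `Fin l × Fin m × Fin (n-1)`).  Triangles: `v_{i,j}v_{i+1,j}v_{i,j+1}`
and `v_{i,j+1}v_{i+1,j+1}v_{i+1,j}`. -/
theorem lGenAntiprism_C3_supermagic (l m n : ℕ) (hm : 3 ≤ m) :
    ∃ f : (Fin l × Fin m × Fin n) ⊕
          ((Fin l × Fin m × Fin n) ⊕
            ((Fin l × Fin m × Fin (n - 1)) ⊕ (Fin l × Fin m × Fin (n - 1)))) → ℕ,
      Function.Injective f ∧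
      Set.range f = Set.Icc 1 (l * m * n + l * m * (3 * n - 2)) ∧
      (∀ x : Fin l × Fin m × Fin n, f (Sum.inl x) ≤ l * m * n) ∧
      (∀ (k : Fin l) (i : Fin m) (j : Fin (n - 1)),
        f (Sum.inl (k, i, ⟨j.val, by have := j.isLt; omega⟩))
          + f (Sum.inl (k, ⟨(i.val + 1) % m, Nat.mod_lt _ (by omega)⟩,
              ⟨j.val, by have := j.isLt; omega⟩))
          + f (Sum.inl (k, i, ⟨j.val + 1, by have := j.isLt; omega⟩))
          + f (Sum.inr (Sum.inl (k, i, ⟨j.val, by have := j.isLt; omega⟩)))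
          + f (Sum.inr (Sum.inr (Sum.inl (k, i, j))))
          + f (Sum.inr (Sum.inr (Sum.inr (k, i, j))))
        = l * m * (9 * n - 4) + 3) ∧
      (∀ (k : Fin l) (i : Fin m) (j : Fin (n - 1)),
        f (Sum.inl (k, i, ⟨j.val + 1, by have := j.isLt; omega⟩))
          + f (Sum.inl (k, ⟨(i.val + 1) % m, Nat.mod_lt _ (by omega)⟩,
              ⟨j.val + 1, by have := j.isLt; omega⟩))
          + f (Sum.inl (k, ⟨(i.val + 1) % m, Nat.mod_lt _ (by omega)⟩,
              ⟨j.val, by have := j.isLt; omega⟩))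
          + f (Sum.inr (Sum.inl (k, i, ⟨j.val + 1, by have := j.isLt; omega⟩)))
          + f (Sum.inr (Sum.inr (Sum.inl (k, ⟨(i.val + 1) % m, Nat.mod_lt _ (by omega)⟩, j))))
          + f (Sum.inr (Sum.inr (Sum.inr (k, i, j))))
        = l * m * (9 * n - 4) + 3) := by
  have : NeZero m := ⟨by omega⟩
  have hsucc (i : Fin m) : (⟨(i.val + 1) % m, Nat.mod_lt _ (by omega)⟩ : Fin m) = i + 1 := by
    ext
    simp [Fin.val_add]
  refine ⟨GenAntiprism.label l m n, GenAntiprism.label_injective, GenAntiprism.range_label,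
    GenAntiprism.label_vertex_le, ?_, ?_⟩
  · intro k i j
    simpa only [hsucc] using GenAntiprism.label_lower_triangle k i j
  · intro k i j
    simpa only [hsucc] using GenAntiprism.label_upper_triangle k i j
end

section
/- If a graph G (with at least 2 vertices in every component) satisfies that kG is G-magic for a positive integer k, then |V(G)|+|E(G)| is even or k is odd. -/
/-!
Summing the magic condition over the `k` components counts every label exactly once, so
`k * c = 1 + 2 + ⋯ + k n = k n (k n + 1) / 2` with `n = |V(G)| + |E(G)|`. Cancelling `k` gives
`2 c = n (k n + 1)`, and the right-hand side is odd when `n` is odd and `k` is even.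
-/

/-- The disjoint union `kG` of `k` copies of a graph `G`. -/
def disjCopies {V : Type} (k : ℕ) (G : SimpleGraph V) : SimpleGraph (Fin k × V) where
  Adj x y := x.1 = y.1 ∧ G.Adj x.2 y.2
  symm := ⟨by rintro x y ⟨h1, h2⟩; exact ⟨h1.symm, h2.symm⟩⟩
  loopless := ⟨by rintro x ⟨-, h⟩; exact G.loopless.irrefl _ h⟩

open Finset

theorem Finset.sum_Icc_one_id_mul_two (M : ℕ) : (∑ i ∈ Icc 1 M, i) * 2 = M * (M + 1) := by
  induction M with
  | zero => simp
  | succ m ih =>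
    rw [sum_Icc_succ_top (by omega), Nat.add_mul, ih]
    ring

theorem sum_mul_two_of_injective_of_range_eq_Icc {α : Type*} [Fintype α] {f : α → ℕ}
    (hf : Function.Injective f) {M : ℕ} (hrange : Set.range f = Set.Icc 1 M) :
    (∑ a, f a) * 2 = M * (M + 1) := by
  have himage : univ.image f = Icc 1 M := by
    apply coe_injective
    rw [coe_image, coe_univ, Set.image_univ, hrange, coe_Icc]
  rw [← sum_Icc_one_id_mul_two, ← himage, sum_image fun x _ y _ h => hf h]

namespace disjCopies

variable {V : Type} (G : SimpleGraph V) (k : ℕ)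

def copy (i : Fin k) : G →g disjCopies k G :=
  ⟨Prod.mk i, fun h => ⟨rfl, h⟩⟩

@[simp] theorem copy_apply (i : Fin k) (x : V) : copy G k i x = (i, x) := rfl

theorem copy_injective (i : Fin k) : Function.Injective (copy G k i) :=
  Prod.mk_right_injective i

theorem bijective_mapEdgeSet_copy :
    Function.Bijective fun p : Fin k × G.edgeSet => (copy G k p.1).mapEdgeSet p.2 := by
  constructor
  · rintro ⟨i, e, he⟩ ⟨j, e', he'⟩ h
    have hmap : Sym2.map (Prod.mk i) e = Sym2.map (Prod.mk j) e' := congrArg Subtype.val h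
    have hij : i = j := by
      have hmem : (i, e.out.1) ∈ Sym2.map (Prod.mk j) e' :=
        hmap ▸ Sym2.mem_map.2 ⟨_, e.out_fst_mem, rfl⟩
      obtain ⟨_, _, hpair⟩ := Sym2.mem_map.1 hmem
      exact (congrArg Prod.fst hpair).symm
    subst hij
    have hee' : e = e' := Sym2.map.injective (Prod.mk_right_injective i) hmap
    subst hee'
    rfl
  · rintro ⟨E, hE⟩
    induction E using Sym2.ind with | _ a b =>
    obtain ⟨hab, hG⟩ := hE
    obtain ⟨i, a⟩ := a
    obtain ⟨j, b⟩ := b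
    obtain rfl : i = j := hab
    exact ⟨(i, ⟨s(a, b), hG⟩), Subtype.ext (Sym2.map_mk _ _ _)⟩

variable [Fintype V] [Fintype G.edgeSet] [Fintype (disjCopies k G).edgeSet]

/-- Every vertex and every edge of `kG` lies in exactly one of the copies `copy G k i`. -/
theorem sum_copies_eq_sum {M : Type*} [AddCommMonoid M]
    (g : (Fin k × V) ⊕ (disjCopies k G).edgeSet → M) :
    ∑ i : Fin k, ((∑ x : V, g (.inl (copy G k i x))) +
        ∑ e : G.edgeSet, g (.inr ((copy G k i).mapEdgeSet e))) = ∑ z, g z := by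
  have hedges : ∑ i : Fin k, ∑ e : G.edgeSet, g (.inr ((copy G k i).mapEdgeSet e)) =
      ∑ E : (disjCopies k G).edgeSet, g (.inr E) := by
    rw [← Fintype.sum_prod_type']
    exact Fintype.sum_bijective _ (bijective_mapEdgeSet_copy G k) _ _ fun _ => rfl
  simp only [sum_add_distrib, hedges, copy_apply, Fintype.sum_sum_type,
    ← Fintype.sum_prod_type']

end disjCopies

theorem kG_Gmagic_parity_general {V : Type} [Fintype V] (G : SimpleGraph V)
    [Fintype G.edgeSet] (k : ℕ) (hk : 0 < k)
    [Fintype (disjCopies k G).edgeSet]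
    (hmagic : ∃ f : (Fin k × V) ⊕ (disjCopies k G).edgeSet → ℕ,
      Function.Injective f ∧
      Set.range f =
        Set.Icc 1 (k * Fintype.card V + k * Fintype.card G.edgeSet) ∧
      ∃ c : ℕ, ∀ φ : G →g disjCopies k G, Function.Injective φ →
        (∑ x : V, f (Sum.inl (φ x))) +
          (∑ e : G.edgeSet, f (Sum.inr (φ.mapEdgeSet e))) = c) :
    Even (Fintype.card V + Fintype.card G.edgeSet) ∨ Odd k := by
  obtain ⟨f, hinj, hrange, c, hc⟩ := hmagic
  set n := Fintype.card V + Fintype.card G.edgeSet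
  have htotal : k * c * 2 = k * n * (k * n + 1) := by
    have hkc : k * c = ∑ z, f z := by
      rw [← disjCopies.sum_copies_eq_sum G k f,
        Fintype.sum_congr _ _ fun i => hc _ (disjCopies.copy_injective G k i)]
      simp
    rw [hkc, sum_mul_two_of_injective_of_range_eq_Icc hinj hrange]
    ring
  have h2c : 2 * c = n * (k * n + 1) :=
    Nat.eq_of_mul_eq_mul_left hk (by linarith)
  by_contra! hcon
  obtain ⟨hn, hkeven⟩ := hcon
  rw [Nat.not_even_iff_odd] at hn
  rw [Nat.not_odd_iff_even] at hkeven
  have hodd : Odd (2 * c) := h2c ▸ hn.mul (hkeven.mul_right n).add_one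
  exact Nat.not_odd_iff_even.2 (even_two_mul c) hodd

/-- If every component of `G` has at least two vertices (equivalently, `G` has no
isolated vertex) and `kG` is `G`-magic (a bijective total labeling of `kG` onto
`{1,…,|V(kG)|+|E(kG)|}` giving every subgraph copy of `G` the same total weight),
then `|V(G)| + |E(G)|` is even or `k` is odd. -/
theorem kG_Gmagic_parity {V : Type} [Fintype V] (G : SimpleGraph V)
    [Fintype G.edgeSet] (k : ℕ) (hk : 0 < k)
    [Fintype (disjCopies k G).edgeSet]
    (hcomp : ∀ v : V, ∃ w : V, G.Adj v w)
    (hmagic : ∃ f : (Fin k × V) ⊕ (disjCopies k G).edgeSet → ℕ,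
      Function.Injective f ∧
      Set.range f =
        Set.Icc 1 (k * Fintype.card V + k * Fintype.card G.edgeSet) ∧
      ∃ c : ℕ, ∀ φ : G →g disjCopies k G, Function.Injective φ →
        (∑ x : V, f (Sum.inl (φ x))) +
          (∑ e : G.edgeSet, f (Sum.inr (φ.mapEdgeSet e))) = c) :
    Even (Fintype.card V + Fintype.card G.edgeSet) ∨ Odd k :=
  kG_Gmagic_parity_general G k hk hmagic
end

section
/- For every m ≥ 2 and n ≥ 2, the graph mP_n (disjoint union of m paths on n vertices) admits an (m+2, 2)-edge-antimagic vertex labeling, i.e., a bijection f : V(mP_n) → {1, ..., mn} such that the set of edge sums {f(x)+f(y) : xy ∈ E(mP_n)} equals {m+2, m+4, ..., m+2(m(n−1))} — an arithmetic progression with first term m+2 and common difference 2. -/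
/-!
Label the vertex `(j, i)` (the `i`-th vertex of the `j`-th path) by `m * i + j + 1`, i.e. number
the vertices column by column. The two ends of the edge `(j, i)—(j, i + 1)` then get labels
`m * i + j + 1` and `m * i + j + m + 1`, whose sum `m + 2 + 2 (m * i + j)` runs through the
progression with difference `2` as the edge `(j, i)` runs through `Fin m × Fin (n - 1)` in the same
column-by-column order.
-/

def columnMajorIndex (m k : ℕ) (p : Fin m × Fin k) : ℕ := p.1 + m * p.2

theorem columnMajorIndex_eq (m k : ℕ) :
    columnMajorIndex m k = Fin.val ∘ finProdFinEquiv ∘ Prod.swap := rfl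

theorem columnMajorIndex_injective (m k : ℕ) : Function.Injective (columnMajorIndex m k) := by
  rw [columnMajorIndex_eq]
  exact Fin.val_injective.comp (finProdFinEquiv.injective.comp Prod.swap_injective)

theorem range_columnMajorIndex (m k : ℕ) :
    Set.range (columnMajorIndex m k) = Set.Iio (m * k) := by
  rw [columnMajorIndex_eq, ← Function.comp_assoc, Prod.swap_surjective.range_comp,
    finProdFinEquiv.surjective.range_comp, Fin.range_val, mul_comm]

theorem columnMajorIndex_add_columnMajorIndex_succ {m k n : ℕ} (j : Fin m) (i : Fin k)
    (h : i.val < n) (h' : i.val + 1 < n) :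
    columnMajorIndex m n (j, ⟨i, h⟩) + 1 + (columnMajorIndex m n (j, ⟨i + 1, h'⟩) + 1) =
      m + 2 + 2 * columnMajorIndex m k (j, i) := by
  simp only [columnMajorIndex]
  ring

/-- `mPₙ` (m ≥ 2, n ≥ 2) admits an `(m+2, 2)`-edge-antimagic vertex labeling:
a bijection onto `{1,…,mn}` whose edge sums are pairwise distinct and form the
arithmetic progression `{m+2, m+4, …, m+2·m(n-1)}`.
Vertices `Fin m × Fin n`; the edges of `mPₙ` join `(j, i)` and `(j, i+1)` and are
indexed by `Fin m × Fin (n-1)`. -/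
theorem mPath_edge_antimagic_vertex (m n : ℕ) :
    ∃ f : Fin m × Fin n → ℕ,
      Function.Injective f ∧
      Set.range f = Set.Icc 1 (m * n) ∧
      Function.Injective (fun p : Fin m × Fin (n - 1) =>
        f (p.1, ⟨p.2.val, by have := p.2.isLt; omega⟩) +
        f (p.1, ⟨p.2.val + 1, by have := p.2.isLt; omega⟩)) ∧
      Set.range (fun p : Fin m × Fin (n - 1) =>
        f (p.1, ⟨p.2.val, by have := p.2.isLt; omega⟩) +
        f (p.1, ⟨p.2.val + 1, by have := p.2.isLt; omega⟩)) =
      {z : ℕ | ∃ t : ℕ, t < m * (n - 1) ∧ z = (m + 2) + 2 * t} := by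
  refine ⟨fun p => columnMajorIndex m n p + 1, ?_, ?_, ?_, ?_⟩
  · exact (add_left_injective 1).comp (columnMajorIndex_injective m n)
  · rw [Set.range_comp' (· + 1), range_columnMajorIndex]
    ext z
    simp only [Set.mem_image, Set.mem_Iio, Set.mem_Icc]
    exact ⟨by rintro ⟨t, ht, rfl⟩; omega, fun hz => ⟨z - 1, by omega, by omega⟩⟩
  · simp only [columnMajorIndex_add_columnMajorIndex_succ, Prod.mk.eta]
    exact Function.Injective.comp (g := fun t => m + 2 + 2 * t) (fun _ _ h => by simp only at h; omega)
      (columnMajorIndex_injective m (n - 1))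
  · simp only [columnMajorIndex_add_columnMajorIndex_succ, Prod.mk.eta]
    rw [Set.range_comp' (fun t => m + 2 + 2 * t), range_columnMajorIndex]
    ext z
    simp only [Set.mem_image, Set.mem_Iio, Set.mem_ofPred_eq, eq_comm]
end
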